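/- The 6×6 matrix A^F(U) of the 2-D γ-based compressible multifluid system (x-direction, with parameters γ > 1, u, v ∈ ℝ, p ∈ ℝ, c > 0) has eigenvalues u − c, u, u, u, u, u + c. -/
import Mathlib

set_option maxHeartbeats 2000000
set_option maxRecDepth 100000

open Polynomial

noncomputable def multifluidAF2D (γ u v p c : ℝ) : Matrix (Fin 6) (Fin 6) ℝ :=
  !![0, 1, 0, 0, 0, 0;
     (γ - 3) / 2 * u ^ 2 + (γ - 1) / 2 * v ^ 2, (3 - γ) * u, (1 - γ) * v, γ - 1,
       (1 - γ) * p, 1 - γ;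
     -(u * v), v, u, 0, 0, 0;
     u * c ^ 2 / (1 - γ) + (γ / 2 - 1) * u * (u ^ 2 + v ^ 2),
       c ^ 2 / (γ - 1) + (3 / 2 - γ) * u ^ 2 + v ^ 2 / 2, (1 - γ) * u * v, γ * u,
       (1 - γ) * p * u, (1 - γ) * u;
     0, 0, 0, 0, u, 0;
     0, 0, 0, 0, 0, u]

lemma det6_aux (a b d e j k l m n o q r s t w z e5 f5 f g h i : ℝ) :
    Matrix.det !![a, b, d, e, 0, 0;
                  f, g, h, i, j, k;
                  l, m, n, o, 0, 0;
                  q, r, s, t, w, z;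
                  0, 0, 0, 0, e5, 0;
                  0, 0, 0, 0, 0, f5] =
      Matrix.det !![a, b, d, e; f, g, h, i; l, m, n, o; q, r, s, t] * (e5 * f5) := by
  simp only [Matrix.det_succ_row_zero, Fin.sum_univ_succ, Matrix.submatrix_apply,
    Matrix.submatrix_submatrix, Function.comp_apply, Fin.zero_succAbove, Fin.succ_succAbove_zero,
    Fin.succ_succAbove_succ, Matrix.det_unique, Fin.default_eq_zero, Finset.univ_unique,
    Finset.sum_singleton, Fin.val_zero, Fin.val_succ, Matrix.cons_val_zero, Matrix.cons_val_succ,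
    Matrix.cons_val', Matrix.cons_val_fin_one, Matrix.head_cons, Matrix.head_fin_const, pow_succ,
    pow_zero, Matrix.of_apply, Matrix.cons_val_one]
  ring

lemma det4_aux (a b d e f g h i l m n o q r s t : ℝ) :
    Matrix.det !![a, b, d, e; f, g, h, i; l, m, n, o; q, r, s, t] =
      a*g*n*t - a*g*o*s - a*h*m*t + a*h*o*r + a*i*m*s - a*i*n*r
      - b*f*n*t + b*f*o*s + b*h*l*t - b*h*o*q - b*i*l*s + b*i*n*q
      + d*f*m*t - d*f*o*r - d*g*l*t + d*g*o*q + d*i*l*r - d*i*m*q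
      - e*f*m*s + e*f*n*r + e*g*l*s - e*g*n*q - e*h*l*r + e*h*m*q := by
  simp only [Matrix.det_succ_row_zero, Fin.sum_univ_succ, Matrix.submatrix_apply,
    Matrix.submatrix_submatrix, Function.comp_apply, Fin.zero_succAbove, Fin.succ_succAbove_zero,
    Fin.succ_succAbove_succ, Matrix.det_unique, Fin.default_eq_zero, Finset.univ_unique,
    Finset.sum_singleton, Fin.val_zero, Fin.val_succ, Matrix.cons_val_zero, Matrix.cons_val_succ,
    Matrix.cons_val', Matrix.cons_val_fin_one, Matrix.head_cons, Matrix.head_fin_const, pow_succ,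
    pow_zero, Matrix.of_apply, Matrix.cons_val_one]
  ring

theorem multifluidAF2D_charpoly (γ u v p c : ℝ) (hγ : 1 < γ) (hc : 0 < c) :
    (multifluidAF2D γ u v p c).charpoly =
      (X - C (u - c)) * (X - C u) ^ 4 * (X - C (u + c)) := by
  have h1 : γ - 1 ≠ 0 := by linarith
  have h2 : (1:ℝ) - γ ≠ 0 := by linarith
  apply Polynomial.funext
  intro x
  rw [Matrix.charpoly, ← Polynomial.coe_evalRingHom, RingHom.map_det,
    Polynomial.coe_evalRingHom, RingHom.mapMatrix_apply]
  simp only [eval_mul, eval_pow, eval_sub, eval_X, eval_C]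
  have hmap : (Matrix.charmatrix (multifluidAF2D γ u v p c)).map (evalRingHom x) =
      x • (1 : Matrix (Fin 6) (Fin 6) ℝ) - multifluidAF2D γ u v p c := by
    ext i j
    simp only [Matrix.map_apply, Matrix.charmatrix_apply, Matrix.sub_apply, Matrix.smul_apply,
      Matrix.one_apply, Matrix.diagonal_apply, coe_evalRingHom, eval_sub, eval_C, smul_eq_mul]
    split <;> simp
  rw [hmap, show x • (1 : Matrix (Fin 6) (Fin 6) ℝ) - multifluidAF2D γ u v p c =
    !![x, -1, 0, 0, 0, 0;
       -((γ - 3) / 2 * u ^ 2 + (γ - 1) / 2 * v ^ 2), x - (3 - γ) * u, -((1 - γ) * v), -(γ - 1),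
         -((1 - γ) * p), -(1 - γ);
       u * v, -v, x - u, 0, 0, 0;
       -(u * c ^ 2 / (1 - γ) + (γ / 2 - 1) * u * (u ^ 2 + v ^ 2)),
         -(c ^ 2 / (γ - 1) + (3 / 2 - γ) * u ^ 2 + v ^ 2 / 2), -((1 - γ) * u * v), x - γ * u,
         -((1 - γ) * p * u), -((1 - γ) * u);
       0, 0, 0, 0, x - u, 0;
       0, 0, 0, 0, 0, x - u] by
    ext i j
    fin_cases i <;> fin_cases j <;>
      norm_num [multifluidAF2D, Matrix.one_apply, Matrix.cons_val_succ, Fin.ext_iff] <;> ring]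
  rw [det6_aux, det4_aux]
  field_simp
  ring
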